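/- arXiv:1206.0368 — 5 statements merged into one kernel-verified Lean document; each statement's English description precedes it below -/
import Mathlib

section
/- Let (N,d) be a geodesic length space, and let (Fₙ), (Gₙ) be sequences of functions N→ℝ₊ each possessing unique minimizers fₙ, gₙ respectively, with all fₙ, gₙ lying in a subset S ⊆ N. Assume (Fₙ) is equiconvex with modulus of convexity δ(ε). If for some ε>0 and N₀∈ℕ, sup_{p∈S} |Fₙ(p) − Gₙ(p)| < δ(ε) for all n ≥ N₀, then d(fₙ, gₙ) < ε for all n ≥ N₀. -/
open Set

/-- A (constant-speed, unit-interval) geodesic from `p` to `q`. -/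
def IsGeodesic {N : Type*} [MetricSpace N] (γ : ℝ → N) (p q : N) : Prop :=
  γ 0 = p ∧ γ 1 = q ∧
    ∀ s ∈ Icc (0:ℝ) 1, ∀ t ∈ Icc (0:ℝ) 1, dist (γ s) (γ t) = |s - t| * dist p q

/-- A geodesic length space: any two points are joined by a geodesic. -/
def GeodesicSpace (N : Type*) [MetricSpace N] : Prop :=
  ∀ p q : N, ∃ γ : ℝ → N, IsGeodesic γ p q

/-- Global Alexandrov NPC (CAT(0)) space. -/
def NPCSpace (N : Type*) [MetricSpace N] : Prop :=
  GeodesicSpace N ∧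
    ∀ (p q r : N) (γ : ℝ → N), IsGeodesic γ p r → ∀ t ∈ Icc (0:ℝ) 1,
      dist q (γ t) ^ 2 ≤
        (1 - t) * dist q p ^ 2 + t * dist q r ^ 2 - t * (1 - t) * dist p r ^ 2

/-- A subset is convex if any two of its points are joined by a geodesic lying in the set. -/
def ConvexSubset {N : Type*} [MetricSpace N] (C : Set N) : Prop :=
  ∀ p ∈ C, ∀ q ∈ C, ∃ γ : ℝ → N, IsGeodesic γ p q ∧ ∀ t ∈ Icc (0:ℝ) 1, γ t ∈ C

/-- `C` is the convex hull of `S`: the smallest convex subset containing `S`. -/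
def IsConvexHull {N : Type*} [MetricSpace N] (S C : Set N) : Prop :=
  ConvexSubset C ∧ S ⊆ C ∧ ∀ D : Set N, ConvexSubset D → S ⊆ D → C ⊆ D

/-- if two sequences of functions with unique minimizers in `S` are
uniformly close on `S` (within the modulus of equiconvexity of the first family),
then their minimizers are close. -/
theorem minimizers_close_of_equiconvex {N : Type*} [MetricSpace N]
    (hgeo : GeodesicSpace N)
    (F G : ℕ → N → ℝ) (f g : ℕ → N) (S : Set N)
    (hFpos : ∀ n p, 0 ≤ F n p) (hGpos : ∀ n p, 0 ≤ G n p)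
    (hfmin : ∀ n, (∀ p, F n (f n) ≤ F n p) ∧ ∀ p, F n p = F n (f n) → p = f n)
    (hgmin : ∀ n, (∀ p, G n (g n) ≤ G n p) ∧ ∀ p, G n p = G n (g n) → p = g n)
    (hfS : ∀ n, f n ∈ S) (hgS : ∀ n, g n ∈ S)
    (δmod : ℝ → ℝ)
    (hequi : ∀ ε > (0:ℝ), ∀ n : ℕ, ∀ (γ : ℝ → N) (a b : N), IsGeodesic γ a b →
      ∀ δ : ℝ, δ < δmod ε →
        (1 / 2) * F n (γ 0) + (1 / 2) * F n (γ 1) - δ ≤ F n (γ (1 / 2)) →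
        dist (γ 0) (γ 1) < ε)
    (ε : ℝ) (hε : 0 < ε) (N₀ : ℕ)
    (hsup : ∀ n ≥ N₀, ∀ p ∈ S, |F n p - G n p| < δmod ε) :
    ∀ n ≥ N₀, dist (f n) (g n) < ε := by
  intro n hn
  obtain ⟨γ, hγ⟩ := hgeo (f n) (g n)
  have h0 := hγ.1
  have h1 := hγ.2.1
  have hFf := abs_lt.1 (hsup n hn (f n) (hfS n))
  have hFg := abs_lt.1 (hsup n hn (g n) (hgS n))
  have hGmin := (hgmin n).1 (f n)
  have hFmin := (hfmin n).1 (γ (1/2))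
  have hδ : (F n (g n) - F n (f n)) / 2 < δmod ε := by linarith
  have hmid : (1 / 2) * F n (γ 0) + (1 / 2) * F n (γ 1)
      - (F n (g n) - F n (f n)) / 2 ≤ F n (γ (1 / 2)) := by
    rw [h0, h1]; linarith
  have := hequi ε hε n γ (f n) (g n) hγ _ hδ hmid
  rwa [h0, h1] at this
end

section
/- Let T be a nonexpansive mapping on a metric space (N,d), and suppose the orbit {p, Tp, T²p, …} of a point p is bounded. Then for any s in the convex hull of the orbit of p, the orbit of s is bounded; specifically d(s, Tⁱs) ≤ 3·diam(co{p,Tp,T²p,…}) for all i. -/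
open Set

/-- for a nonexpansive map with bounded orbit of `p`, the orbit of any
point `s` in the convex hull of the orbit of `p` is bounded, with
`d(s, Tⁱ s) ≤ 3 · diam (co {p, Tp, T²p, …})`. -/
theorem orbit_of_convexHull_point_bounded {N : Type*} [MetricSpace N]
    (hN : NPCSpace N) (T : N → N)
    (hT : ∀ x y : N, dist (T x) (T y) ≤ dist x y)
    (p : N) (hbdd : Bornology.IsBounded (Set.range fun i : ℕ => T^[i] p))
    (C : Set N) (hC : IsConvexHull (Set.range fun i : ℕ => T^[i] p) C)
    (s : N) (hs : s ∈ C) :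
    Bornology.IsBounded (Set.range fun i : ℕ => T^[i] s) ∧
      ∀ i : ℕ, edist s (T^[i] s) ≤ 3 * EMetric.diam C := by
  have hTn : ∀ (i : ℕ) (x y : N), dist (T^[i] x) (T^[i] y) ≤ dist x y := by
    intro i
    induction i with
    | zero => simp
    | succ n ih =>
      intro x y
      rw [Function.iterate_succ_apply', Function.iterate_succ_apply']
      exact (hT _ _).trans (ih x y)
  have hpC : ∀ i : ℕ, T^[i] p ∈ C := fun i => hC.2.1 ⟨i, rfl⟩
  constructor
  · obtain ⟨M, hM⟩ := hbdd.subset_closedBall p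
    apply Bornology.IsBounded.subset (Metric.isBounded_closedBall (x := p) (r := M + dist s p))
    rintro _ ⟨i, rfl⟩
    simp only [Metric.mem_closedBall]
    calc dist (T^[i] s) p ≤ dist (T^[i] s) (T^[i] p) + dist (T^[i] p) p := dist_triangle _ _ _
      _ ≤ dist s p + M := by
          have := hM ⟨i, rfl⟩
          simp only [Metric.mem_closedBall] at this
          exact add_le_add (hTn i s p) this
      _ = M + dist s p := by ring
  · intro i
    have h1 : edist s (T^[i] p) ≤ EMetric.diam C :=
      EMetric.edist_le_diam_of_mem hs (hpC i)
    have h2 : edist (T^[i] p) (T^[i] s) ≤ EMetric.diam C := by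
      calc edist (T^[i] p) (T^[i] s) ≤ edist p s := by
            rw [edist_dist, edist_dist]
            exact ENNReal.ofReal_le_ofReal (hTn i p s)
        _ ≤ EMetric.diam C := EMetric.edist_le_diam_of_mem (hpC 0) hs
    calc edist s (T^[i] s) ≤ edist s (T^[i] p) + edist (T^[i] p) (T^[i] s) :=
          edist_triangle _ _ _
      _ ≤ EMetric.diam C + EMetric.diam C := add_le_add h1 h2
      _ ≤ 3 * EMetric.diam C := by
          rw [← two_mul]
          exact mul_le_mul_left (by norm_num) _
end

section
/- Let (N,d) be a complete global Alexandrov NPC space, T:N→N nonexpansive, and p a point with bounded orbit. Let mₙ(p) be the unique minimizer of Fₙ(r) = (1/n)Σ_{i=0}^{n−1} d²(r, Tⁱp). Then d(T mₙ(p), mₙ(p)) → 0 as n → ∞. -/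
open Set

open Finset Filter Topology

/-!
Let `x = mₙ(p)` and `F = n Fₙ`. Applying the NPC inequality at the midpoint `z` of `x` and `T x`
to every point of the orbit gives `F z ≤ (F x + F (T x)) / 2 - n d(x, T x)² / 4`, and `F x ≤ F z`
by minimality, so `n d(x, T x)² ≤ 2 (F (T x) - F x)`. Since `T` is nonexpansive and shifts the
orbit, `F (T x) ≤ F x + d(T x, p)²`, and `d(T x, p)` is bounded uniformly in `n` because the orbit
is bounded. Hence `d(x, T x)² = O(1/n)`.
-/

theorem NPCSpace.exists_midpoint_dist_sq_le {N : Type*} [MetricSpace N] (hN : NPCSpace N)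
    (x y : N) :
    ∃ z : N, ∀ q : N, dist z q ^ 2 ≤ (dist x q ^ 2 + dist y q ^ 2) / 2 - dist x y ^ 2 / 4 := by
  obtain ⟨γ, hγ⟩ := hN.1 x y
  refine ⟨γ (1 / 2), fun q => ?_⟩
  have h := hN.2 x q y γ hγ (1 / 2) ⟨by norm_num, by norm_num⟩
  rw [dist_comm (γ _), dist_comm x, dist_comm y]
  linarith

theorem NPCSpace.card_mul_dist_sq_le_of_forall_sum_le {N : Type*} [MetricSpace N]
    (hN : NPCSpace N) {ι : Type*} (s : Finset ι) (a : ι → N) {x : N}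
    (hx : ∀ r : N, ∑ i ∈ s, dist x (a i) ^ 2 ≤ ∑ i ∈ s, dist r (a i) ^ 2) (y : N) :
    #s * dist x y ^ 2 ≤ 2 * (∑ i ∈ s, dist y (a i) ^ 2 - ∑ i ∈ s, dist x (a i) ^ 2) := by
  obtain ⟨z, hz⟩ := hN.exists_midpoint_dist_sq_le x y
  have hsum : ∑ i ∈ s, dist z (a i) ^ 2 ≤
      (∑ i ∈ s, dist x (a i) ^ 2 + ∑ i ∈ s, dist y (a i) ^ 2) / 2 - #s * (dist x y ^ 2 / 4) := by
    calc ∑ i ∈ s, dist z (a i) ^ 2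
        ≤ ∑ i ∈ s, ((dist x (a i) ^ 2 + dist y (a i) ^ 2) / 2 - dist x y ^ 2 / 4) :=
          sum_le_sum fun i _ => hz (a i)
      _ = _ := by rw [sum_sub_distrib, ← sum_div, sum_add_distrib, sum_const, nsmul_eq_mul]
  linarith [hx z]

theorem sum_range_dist_sq_iterate_le {N : Type*} [PseudoMetricSpace N] {T : N → N}
    (hT : ∀ x y : N, dist (T x) (T y) ≤ dist x y) (p x : N) (n : ℕ) :
    ∑ i ∈ range n, dist (T x) (T^[i] p) ^ 2 ≤
      ∑ i ∈ range n, dist x (T^[i] p) ^ 2 + dist (T x) p ^ 2 := by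
  cases n with
  | zero => simp only [range_zero, sum_empty, zero_add]; positivity
  | succ k =>
    have hshift : ∑ i ∈ range k, dist (T x) (T^[i + 1] p) ^ 2 ≤
        ∑ i ∈ range k, dist x (T^[i] p) ^ 2 :=
      sum_le_sum fun i _ => by
        rw [Function.iterate_succ_apply']
        exact pow_le_pow_left₀ dist_nonneg (hT _ _) 2
    rw [sum_range_succ', sum_range_succ, Function.iterate_zero_apply]
    linarith [sq_nonneg (dist x (T^[k] p))]

theorem dist_le_two_mul_of_sum_dist_sq_le {N : Type*} [PseudoMetricSpace N] {ι : Type*}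
    {s : Finset ι} (hs : s.Nonempty) {a : ι → N} {c x : N} {D : ℝ}
    (ha : ∀ i ∈ s, dist (a i) c ≤ D)
    (hx : ∑ i ∈ s, dist x (a i) ^ 2 ≤ ∑ i ∈ s, dist c (a i) ^ 2) :
    dist x c ≤ 2 * D := by
  obtain ⟨i, hi, hle⟩ := exists_le_of_sum_le hs hx
  have hxi : dist x (a i) ≤ dist c (a i) :=
    (pow_le_pow_iff_left₀ dist_nonneg dist_nonneg two_ne_zero).mp hle
  calc dist x c ≤ dist x (a i) + dist (a i) c := dist_triangle _ _ _
    _ ≤ D + D := add_le_add ((hxi.trans_eq (dist_comm _ _)).trans (ha i hi)) (ha i hi)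
    _ = 2 * D := by ring

theorem tendsto_zero_of_sq_le_div_nat {f : ℕ → ℝ} (hf : ∀ n, 0 ≤ f n) (C : ℝ)
    (h : ∀ᶠ n in atTop, f n ^ 2 ≤ C / n) : Tendsto f atTop (𝓝 0) := by
  have hsq : Tendsto (fun n => f n ^ 2) atTop (𝓝 0) :=
    squeeze_zero' (Eventually.of_forall fun n => sq_nonneg _) h
      (tendsto_const_div_atTop_nhds_zero_nat C)
  simpa only [Real.sqrt_sq (hf _), Real.sqrt_zero] using hsq.sqrt

theorem dist_mean_image_tendsto_zero_general {N : Type*} [MetricSpace N]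
    (hN : NPCSpace N) (T : N → N)
    (hT : ∀ x y : N, dist (T x) (T y) ≤ dist x y)
    (p : N) (hbdd : Bornology.IsBounded (Set.range fun i : ℕ => T^[i] p))
    (m : ℕ → N)
    (hm : ∀ n : ℕ, 0 < n → ∀ r : N,
      (1 / (n : ℝ)) * ∑ i ∈ Finset.range n, dist (m n) (T^[i] p) ^ 2 ≤
        (1 / (n : ℝ)) * ∑ i ∈ Finset.range n, dist r (T^[i] p) ^ 2) :
    Filter.Tendsto (fun n => dist (T (m n)) (m n)) Filter.atTop (nhds 0) := by
  obtain ⟨D, hD⟩ := hbdd.subset_closedBall p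
  have horbit (i : ℕ) : dist (T^[i] p) p ≤ D := hD ⟨i, rfl⟩
  refine tendsto_zero_of_sq_le_div_nat (fun _ => dist_nonneg) (2 * (3 * D) ^ 2) ?_
  filter_upwards [eventually_gt_atTop 0] with n hn
  have hmin (r : N) := (mul_le_mul_iff_right₀ (by positivity)).mp (hm n hn r)
  have hmp : dist (m n) p ≤ 2 * D :=
    dist_le_two_mul_of_sum_dist_sq_le (nonempty_range_iff.mpr hn.ne')
      (fun i _ => horbit i) (hmin p)
  have hTmp : dist (T (m n)) p ≤ 3 * D := by
    calc dist (T (m n)) p ≤ dist (T (m n)) (T p) + dist (T p) p := dist_triangle _ _ _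
      _ ≤ 2 * D + D := add_le_add ((hT _ _).trans hmp) (horbit 1)
      _ = 3 * D := by ring
  have hconv := hN.card_mul_dist_sq_le_of_forall_sum_le (range n) _ hmin (T (m n))
  have hshift := sum_range_dist_sq_iterate_le hT p (m n) n
  rw [card_range] at hconv
  rw [le_div_iff₀ (by exact_mod_cast hn), dist_comm]
  nlinarith [dist_nonneg (x := T (m n)) (y := p)]

/-- for a nonexpansive map with bounded orbit, the means `mₙ(p)` of the
iterates satisfy `d(T mₙ(p), mₙ(p)) → 0`. -/
theorem dist_mean_image_tendsto_zero {N : Type*} [MetricSpace N] [CompleteSpace N]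
    (hN : NPCSpace N) (T : N → N)
    (hT : ∀ x y : N, dist (T x) (T y) ≤ dist x y)
    (p : N) (hbdd : Bornology.IsBounded (Set.range fun i : ℕ => T^[i] p))
    (m : ℕ → N)
    (hm : ∀ n : ℕ, 0 < n → ∀ r : N,
      (1 / (n : ℝ)) * ∑ i ∈ Finset.range n, dist (m n) (T^[i] p) ^ 2 ≤
        (1 / (n : ℝ)) * ∑ i ∈ Finset.range n, dist r (T^[i] p) ^ 2) :
    Filter.Tendsto (fun n => dist (T (m n)) (m n)) Filter.atTop (nhds 0) :=
  dist_mean_image_tendsto_zero_general hN T hT p hbdd m hm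
end

section
/- Fixed point theorem: Let (N,d) be a complete global Alexandrov NPC space and T:N→N a nonexpansive mapping. If some point p ∈ N has bounded orbit {p, Tp, T²p, …}, then T has a fixed point q lying in the closed convex hull of the orbit of p. -/
open Set

/-!
Let `xₙ = Tⁿ p` and `f z = limsup d(z, xₙ)²`, finite because the orbit is bounded. The CAT(0)
inequality at midpoints makes `f` strongly convex: `f(m) ≤ (f a + f b)/2 - d(a, b)²/4`. Hence a
minimizing sequence is Cauchy, and by completeness and continuity `f` has a minimizer `q`, which
is unique. Nonexpansiveness gives `f (T z) ≤ f z`, so `T q = q`. Finally the closure of the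
convex hull is closed and convex, so `q` has a nearest point `π` in it; `π` is no farther than `q`
from every `xₙ`, whence `f π ≤ f q` and `π = q`.
-/

open Filter Topology

section

variable {N : Type*} [MetricSpace N]

namespace IsGeodesic

variable {γ : ℝ → N} {p q : N}

theorem symm (h : IsGeodesic γ p q) : IsGeodesic (fun t => γ (1 - t)) q p := by
  obtain ⟨h0, h1, hd⟩ := h
  refine ⟨by simpa using h1, by simpa using h0, fun s hs t ht => ?_⟩
  rw [hd _ ⟨by linarith [hs.2], by linarith [hs.1]⟩ _ ⟨by linarith [ht.2], by linarith [ht.1]⟩,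
    dist_comm p q, show 1 - s - (1 - t) = -(s - t) by ring, abs_neg]

theorem dist_apply_left (h : IsGeodesic γ p q) {t : ℝ} (ht : t ∈ Icc (0 : ℝ) 1) :
    dist (γ t) p = t * dist p q := by
  simpa [h.1, abs_of_nonneg ht.1] using h.2.2 t ht 0 ⟨le_rfl, zero_le_one⟩

end IsGeodesic

def StrongMidconvexOn (S : Set N) (f : N → ℝ) : Prop :=
  ∀ x ∈ S, ∀ y ∈ S, ∃ m ∈ S, f m ≤ (f x + f y) / 2 - dist x y ^ 2 / 4

namespace StrongMidconvexOn

variable {S : Set N} {f : N → ℝ}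

theorem cauchySeq_of_tendsto (hf : StrongMidconvexOn S f) {μ : ℝ} (hμ : ∀ z ∈ S, μ ≤ f z)
    {y : ℕ → N} (hyS : ∀ n, y n ∈ S) (hy : Tendsto (f ∘ y) atTop (𝓝 μ)) : CauchySeq y := by
  refine Metric.cauchySeq_iff.2 fun ε hε => ?_
  obtain ⟨K, hK⟩ := eventually_atTop.1 <| hy.eventually <| gt_mem_nhds <|
    lt_add_of_pos_right μ (by positivity : 0 < ε ^ 2 / 4)
  refine ⟨K, fun m hm n hn => ?_⟩
  obtain ⟨z, hzS, hz⟩ := hf _ (hyS m) _ (hyS n)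
  have : dist (y m) (y n) ^ 2 < ε ^ 2 := by
    have hym : f (y m) < μ + ε ^ 2 / 4 := hK m hm
    have hyn : f (y n) < μ + ε ^ 2 / 4 := hK n hn
    linarith [hμ z hzS]
  exact lt_of_pow_lt_pow_left₀ 2 hε.le this

theorem exists_isMinOn [CompleteSpace N] (hf : StrongMidconvexOn S f) (hS : IsClosed S)
    (hne : S.Nonempty) (hcont : ContinuousOn f S) (hbdd : BddBelow (f '' S)) :
    ∃ q ∈ S, IsMinOn f S q := by
  obtain ⟨v, -, hv, hvS⟩ := exists_seq_tendsto_sInf (hne.image f) hbdd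
  choose y hyS hyv using hvS
  have hμ : ∀ z ∈ S, sInf (f '' S) ≤ f z := fun z hz => csInf_le hbdd (mem_image_of_mem f hz)
  have hfy : Tendsto (f ∘ y) atTop (𝓝 (sInf (f '' S))) := by
    simpa only [Function.comp_def, hyv] using hv
  obtain ⟨q, hq⟩ := cauchySeq_tendsto_of_complete (hf.cauchySeq_of_tendsto hμ hyS hfy)
  have hqS : q ∈ S := hS.mem_of_tendsto hq (Eventually.of_forall hyS)
  have hfq : f q = sInf (f '' S) := tendsto_nhds_unique
    ((hcont q hqS).tendsto.comp (tendsto_nhdsWithin_iff.2 ⟨hq, Eventually.of_forall hyS⟩)) hfy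
  exact ⟨q, hqS, isMinOn_iff.2 fun z hz => hfq ▸ hμ z hz⟩

theorem eq_of_isMinOn (hf : StrongMidconvexOn S f) {q w : N} (hq : q ∈ S) (hmin : IsMinOn f S q)
    (hw : w ∈ S) (hle : f w ≤ f q) : w = q := by
  obtain ⟨m, hmS, hm⟩ := hf w hw q hq
  have : dist w q ^ 2 ≤ 0 := by linarith [isMinOn_iff.1 hmin m hmS]
  exact dist_eq_zero.1 (pow_eq_zero_iff two_ne_zero |>.1 (le_antisymm this (sq_nonneg _)))

end StrongMidconvexOn

theorem Filter.limsup_le_of_le_average {ι : Type*} {l : Filter ι} {u v w : ι → ℝ} {c : ℝ}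
    (hu : l.IsBoundedUnder (· ≤ ·) u) (hv : l.IsBoundedUnder (· ≤ ·) v)
    (hw : l.IsCoboundedUnder (· ≤ ·) w) (h : ∀ᶠ i in l, w i ≤ (u i + v i) / 2 + c) :
    limsup w l ≤ (limsup u l + limsup v l) / 2 + c := by
  refine le_of_forall_pos_le_add fun ε hε => limsup_le_of_le hw ?_
  filter_upwards [h, eventually_lt_of_limsup_lt (lt_add_of_pos_right (limsup u l) hε) hu,
    eventually_lt_of_limsup_lt (lt_add_of_pos_right (limsup v l) hε) hv] with i hi hui hvi
  linarith

noncomputable def asymptoticSq (x : ℕ → N) (z : N) : ℝ :=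
  limsup (fun n => dist z (x n) ^ 2) atTop

section asymptoticSq

open Bornology

variable {x : ℕ → N}

theorem isBoundedUnder_dist_sq (hx : IsBounded (range x)) (z : N) :
    atTop.IsBoundedUnder (· ≤ ·) fun n => dist z (x n) ^ 2 := by
  obtain ⟨r, hr⟩ := (Metric.isBounded_iff_subset_closedBall z).1 hx
  refine isBoundedUnder_of ⟨r ^ 2, fun n => pow_le_pow_left₀ dist_nonneg ?_ 2⟩
  simpa [dist_comm] using hr ⟨n, rfl⟩

theorem asymptoticSq_nonneg (hx : IsBounded (range x)) (z : N) : 0 ≤ asymptoticSq x z :=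
  le_limsup_of_frequently_le (Frequently.of_forall fun _ => sq_nonneg _)
    (isBoundedUnder_dist_sq hx z)

theorem asymptoticSq_le_average_add (hx : IsBounded (range x)) {z a b : N} {c : ℝ}
    (h : ∀ n, dist z (x n) ^ 2 ≤ (dist a (x n) ^ 2 + dist b (x n) ^ 2) / 2 + c) :
    asymptoticSq x z ≤ (asymptoticSq x a + asymptoticSq x b) / 2 + c :=
  limsup_le_of_le_average (isBoundedUnder_dist_sq hx a) (isBoundedUnder_dist_sq hx b)
    (isCoboundedUnder_le_of_le atTop fun _ => sq_nonneg _) (Eventually.of_forall h)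

theorem asymptoticSq_le_add (hx : IsBounded (range x)) {z w : N} {c : ℝ}
    (h : ∀ n, dist z (x n) ^ 2 ≤ dist w (x n) ^ 2 + c) :
    asymptoticSq x z ≤ asymptoticSq x w + c := by
  simpa using asymptoticSq_le_average_add hx (a := w) (b := w) (by simpa using h)

theorem continuous_asymptoticSq (hx : IsBounded (range x)) : Continuous (asymptoticSq x) := by
  have key : ∀ z w : N, ∀ R, (∀ n, dist w (x n) ≤ R) →
      asymptoticSq x z ≤ asymptoticSq x w + dist z w * (2 * R + dist z w) := by
    intro z w R hR
    refine asymptoticSq_le_add hx fun n => ?_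
    have hz : dist z (x n) ≤ dist z w + dist w (x n) := dist_triangle z w (x n)
    nlinarith [hR n, dist_nonneg (x := z) (y := x n), dist_nonneg (x := z) (y := w)]
  refine continuous_iff_continuousAt.2 fun w => ?_
  obtain ⟨R, hR⟩ := (Metric.isBounded_iff_subset_closedBall w).1 hx
  have hRw : ∀ n, dist w (x n) ≤ R := fun n => by simpa [dist_comm] using hR ⟨n, rfl⟩
  have hRz : ∀ z n, dist z (x n) ≤ R + dist z w := fun z n => by
    linarith [dist_triangle z w (x n), hRw n]
  refine tendsto_iff_dist_tendsto_zero.2 <| squeeze_zero (fun _ => dist_nonneg)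
    (g := fun z => dist z w * (2 * R + 3 * dist z w)) (fun z => ?_) ?_
  · rw [Real.dist_eq, abs_le]
    have h₁ := key z w R hRw
    have h₂ := key w z _ (hRz z)
    rw [dist_comm w z] at h₂
    constructor <;> nlinarith [dist_nonneg (x := z) (y := w)]
  · simpa using ((by fun_prop : Continuous fun z => dist z w * (2 * R + 3 * dist z w)).tendsto w)

theorem asymptoticSq_orbit_apply_le {T : N → N} (hT : ∀ x y, dist (T x) (T y) ≤ dist x y)
    {p : N} (hx : IsBounded (range fun n => T^[n] p)) (z : N) :
    asymptoticSq (fun n => T^[n] p) (T z) ≤ asymptoticSq (fun n => T^[n] p) z := by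
  rw [asymptoticSq, ← limsup_nat_add _ 1]
  refine limsup_le_limsup (Eventually.of_forall fun n => ?_)
    (isCoboundedUnder_le_of_le atTop fun _ => sq_nonneg _) (isBoundedUnder_dist_sq hx z)
  simp only [Function.iterate_succ_apply']
  exact pow_le_pow_left₀ dist_nonneg (hT z _) 2

end asymptoticSq

namespace NPCSpace

theorem dist_sq_midpoint_le (hN : NPCSpace N) {γ : ℝ → N} {a b : N} (hγ : IsGeodesic γ a b)
    (z : N) : dist z (γ (1 / 2)) ^ 2 ≤ (dist z a ^ 2 + dist z b ^ 2) / 2 - dist a b ^ 2 / 4 := by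
  have := hN.2 a z b γ hγ (1 / 2) ⟨by norm_num, by norm_num⟩
  linarith

theorem dist_geodesic_le_of_left_eq (hN : NPCSpace N) {γ γ' : ℝ → N} {p q q' : N}
    (hγ : IsGeodesic γ p q) (hγ' : IsGeodesic γ' p q') {t : ℝ} (ht : t ∈ Icc (0 : ℝ) 1) :
    dist (γ t) (γ' t) ≤ t * dist q q' := by
  have h₁ := hN.2 p (γ t) q' γ' hγ' t ht
  have h₂ := hN.2 p q' q γ hγ t ht
  rw [hγ.dist_apply_left ht, dist_comm (γ t) q'] at h₁
  rw [dist_comm q' p, dist_comm q' q] at h₂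
  refine pow_le_pow_iff_left₀ dist_nonneg (mul_nonneg ht.1 dist_nonneg) two_ne_zero |>.1 ?_
  nlinarith [mul_le_mul_of_nonneg_left h₂ ht.1]

theorem dist_geodesic_le (hN : NPCSpace N) {γ γ' : ℝ → N} {p q p' q' : N}
    (hγ : IsGeodesic γ p q) (hγ' : IsGeodesic γ' p' q') {t : ℝ} (ht : t ∈ Icc (0 : ℝ) 1) :
    dist (γ t) (γ' t) ≤ (1 - t) * dist p p' + t * dist q q' := by
  obtain ⟨η, hη⟩ := hN.1 p q'
  have h₁ : dist (γ t) (η t) ≤ t * dist q q' := hN.dist_geodesic_le_of_left_eq hγ hη ht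
  have h₂ : dist (η t) (γ' t) ≤ (1 - t) * dist p p' := by
    simpa using hN.dist_geodesic_le_of_left_eq hη.symm hγ'.symm (t := 1 - t)
      ⟨by linarith [ht.2], by linarith [ht.1]⟩
  linarith [dist_triangle (γ t) (η t) (γ' t)]

theorem convexSubset_closure [CompleteSpace N] (hN : NPCSpace N) {C : Set N}
    (hC : ConvexSubset C) : ConvexSubset (closure C) := by
  intro a ha b hb
  obtain ⟨u, hu, hua⟩ := mem_closure_iff_seq_limit.1 ha
  obtain ⟨v, hv, hvb⟩ := mem_closure_iff_seq_limit.1 hb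
  choose Γ hΓ hΓC using fun n => hC (u n) (hu n) (v n) (hv n)
  have hcauchy : ∀ t ∈ Icc (0 : ℝ) 1, CauchySeq fun n => Γ n t := by
    intro t ht
    have huv := Metric.cauchySeq_iff.1 (hua.prodMk_nhds hvb).cauchySeq
    refine Metric.cauchySeq_iff.2 fun ε hε => (huv ε hε).imp fun K hK m hm n hn => ?_
    have hlt := hK m hm n hn
    rw [Prod.dist_eq] at hlt
    calc dist (Γ m t) (Γ n t) ≤ (1 - t) * dist (u m) (u n) + t * dist (v m) (v n) :=
          hN.dist_geodesic_le (hΓ m) (hΓ n) ht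
      _ ≤ max (dist (u m) (u n)) (dist (v m) (v n)) := by
          nlinarith [le_max_left (dist (u m) (u n)) (dist (v m) (v n)),
            le_max_right (dist (u m) (u n)) (dist (v m) (v n)), ht.1, ht.2]
      _ < ε := hlt
  have : Nonempty N := ⟨a⟩
  set γ : ℝ → N := fun t => limUnder atTop fun n => Γ n t
  have hγ : ∀ t ∈ Icc (0 : ℝ) 1, Tendsto (fun n => Γ n t) atTop (𝓝 (γ t)) :=
    fun t ht => (hcauchy t ht).tendsto_limUnder
  refine ⟨γ, ⟨?_, ?_, fun s hs t ht => ?_⟩, fun t ht =>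
    mem_closure_of_tendsto (hγ t ht) (Eventually.of_forall fun n => hΓC n t ht)⟩
  · exact tendsto_nhds_unique (hγ 0 ⟨le_rfl, zero_le_one⟩) (by simpa only [(hΓ _).1] using hua)
  · exact tendsto_nhds_unique (hγ 1 ⟨zero_le_one, le_rfl⟩) (by simpa only [(hΓ _).2.1] using hvb)
  · exact tendsto_nhds_unique ((hγ s hs).dist (hγ t ht))
      (by simpa only [(hΓ _).2.2 s hs t ht] using (hua.dist hvb).const_mul |s - t|)

theorem strongMidconvexOn_dist_sq (hN : NPCSpace N) {S : Set N} (hS : ConvexSubset S) (q : N) :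
    StrongMidconvexOn S fun z => dist q z ^ 2 := fun a ha b hb => by
  obtain ⟨γ, hγ, hγS⟩ := hS a ha b hb
  exact ⟨γ (1 / 2), hγS _ ⟨by norm_num, by norm_num⟩, hN.dist_sq_midpoint_le hγ q⟩

theorem dist_sq_add_dist_sq_le_of_isMinOn (hN : NPCSpace N) {S : Set N} (hS : ConvexSubset S)
    {q π s : N} (hπ : π ∈ S) (hmin : IsMinOn (fun z => dist q z ^ 2) S π) (hs : s ∈ S) :
    dist q π ^ 2 + dist π s ^ 2 ≤ dist q s ^ 2 := by
  obtain ⟨γ, hγ, hγS⟩ := hS π hπ s hs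
  have key : ∀ t ∈ Ioc (0 : ℝ) 1, (1 - t) * dist π s ^ 2 ≤ dist q s ^ 2 - dist q π ^ 2 := by
    intro t ht
    have hnpc := hN.2 π q s γ hγ t (Ioc_subset_Icc_self ht)
    have hle := isMinOn_iff.1 hmin (γ t) (hγS t (Ioc_subset_Icc_self ht))
    refine le_of_mul_le_mul_left ?_ ht.1
    linarith
  have hlim : Tendsto (fun t => (1 - t) * dist π s ^ 2) (𝓝[>] 0) (𝓝 (dist π s ^ 2)) := by
    have hcont : Continuous fun t : ℝ => (1 - t) * dist π s ^ 2 := by fun_prop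
    simpa using (hcont.tendsto 0).mono_left nhdsWithin_le_nhds
  linarith [le_of_tendsto hlim (eventually_of_mem (Ioc_mem_nhdsGT zero_lt_one) key)]

theorem exists_mem_dist_sq_add_dist_sq_le [CompleteSpace N] (hN : NPCSpace N) {S : Set N}
    (hS : ConvexSubset S) (hSc : IsClosed S) (hne : S.Nonempty) (q : N) :
    ∃ π ∈ S, ∀ s ∈ S, dist q π ^ 2 + dist π s ^ 2 ≤ dist q s ^ 2 := by
  obtain ⟨π, hπ, hmin⟩ := (hN.strongMidconvexOn_dist_sq hS q).exists_isMinOn hSc hne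
    (by fun_prop) ⟨0, forall_mem_image.2 fun _ _ => sq_nonneg _⟩
  exact ⟨π, hπ, fun s hs => hN.dist_sq_add_dist_sq_le_of_isMinOn hS hπ hmin hs⟩

theorem strongMidconvexOn_asymptoticSq (hN : NPCSpace N) {x : ℕ → N}
    (hx : Bornology.IsBounded (range x)) : StrongMidconvexOn univ (asymptoticSq x) := by
  intro a _ b _
  obtain ⟨γ, hγ⟩ := hN.1 a b
  refine ⟨γ (1 / 2), mem_univ _, ?_⟩
  rw [sub_eq_add_neg]
  refine asymptoticSq_le_average_add hx fun n => ?_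
  rw [dist_comm (γ _), dist_comm a, dist_comm b, ← sub_eq_add_neg]
  exact hN.dist_sq_midpoint_le hγ (x n)

end NPCSpace

end

/-- Fixed point theorem: a nonexpansive map on a complete global
Alexandrov NPC space with a bounded orbit has a fixed point in the closed convex
hull of that orbit. -/
theorem npc_fixed_point_of_bounded_orbit {N : Type*} [MetricSpace N] [CompleteSpace N]
    (hN : NPCSpace N) (T : N → N)
    (hT : ∀ x y : N, dist (T x) (T y) ≤ dist x y)
    (p : N) (hbdd : Bornology.IsBounded (Set.range fun i : ℕ => T^[i] p))
    (C : Set N) (hC : IsConvexHull (Set.range fun i : ℕ => T^[i] p) C) :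
    ∃ q ∈ closure C, T q = q := by
  have hf := hN.strongMidconvexOn_asymptoticSq hbdd
  obtain ⟨q, -, hq⟩ := hf.exists_isMinOn isClosed_univ ⟨p, mem_univ p⟩
    (continuous_asymptoticSq hbdd).continuousOn
    ⟨0, forall_mem_image.2 fun z _ => asymptoticSq_nonneg hbdd z⟩
  have horbit : ∀ n, T^[n] p ∈ closure C := fun n => subset_closure (hC.2.1 ⟨n, rfl⟩)
  obtain ⟨π, hπC, hπ⟩ := hN.exists_mem_dist_sq_add_dist_sq_le (hN.convexSubset_closure hC.1)
    isClosed_closure ⟨p, horbit 0⟩ q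
  have hπq : asymptoticSq (fun n => T^[n] p) π ≤ asymptoticSq (fun n => T^[n] p) q := by
    simpa using asymptoticSq_le_add hbdd (c := 0) fun n => by
      linarith [hπ _ (horbit n), sq_nonneg (dist q π)]
  refine ⟨q, ?_, ?_⟩
  · rwa [← hf.eq_of_isMinOn (mem_univ q) hq (mem_univ π) hπq]
  · exact hf.eq_of_isMinOn (mem_univ q) hq (mem_univ _) (asymptoticSq_orbit_apply_le hT hbdd q)
end

section
/- Let T be a distance convex nonexpansive mapping on a complete global Alexandrov NPC space (N,d) with a bounded orbit {p,Tp,T²p,…}, and let s ∈ co{p,Tp,T²p,…}. Then for every ε>0 there is N∈ℕ such that d(mₙ(p), mₙ(s)) < ε for all n ≥ N, where mₙ(x) denotes the mean of the first n iterates of x under T. -/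
/-!
The set of points `x` with `d(mₙ x, mₙ p) → 0` is convex by distance convexity, so it contains the
hull as soon as it contains every orbit point `Tⁱ p`. The energies minimized by `mₙ p` and
`mₙ (Tⁱ p)` are sums over the windows `[0, n)` and `[i, i + n)` of the orbit, which differ in only
`2i` terms bounded by the orbit's diameter; the variance inequality of the NPC space then gives
`d(mₙ p, mₙ (Tⁱ p))² = O(i / n)`.
-/

open Set

open Filter Topology

section

open Finset

lemma le_of_forall_one_sub_mul_le {a b : ℝ} (h : ∀ t ∈ Ioo (0:ℝ) 1, (1 - t) * a ≤ b) :
    a ≤ b := by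
  have hlim : Tendsto (fun t : ℝ => (1 - t) * a) (𝓝[>] 0) (𝓝 a) := by
    have : Continuous fun t : ℝ => (1 - t) * a := by fun_prop
    simpa using (this.tendsto 0).mono_left nhdsWithin_le_nhds
  refine le_of_tendsto hlim ?_
  filter_upwards [Ioo_mem_nhdsGT one_pos] with t ht using h t ht

lemma abs_sum_range_add_sub_sum_range_le {f : ℕ → ℝ} {M : ℝ} (hf : ∀ k, f k ∈ Icc 0 M)
    (n i : ℕ) : |∑ k ∈ range n, f (k + i) - ∑ k ∈ range n, f k| ≤ i * M := by
  have hsplit₁ := sum_range_add f i n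
  have hsplit₂ := sum_range_add f n i
  have hbound : ∀ g : ℕ → ℝ, (∀ k, g k ∈ Icc 0 M) → ∑ k ∈ range i, g k ∈ Icc 0 (i * M) :=
    fun g hg => ⟨sum_nonneg fun k _ => (hg k).1,
      by simpa using sum_le_card_nsmul (range i) g M fun k _ => (hg k).2⟩
  obtain ⟨h₁, h₂⟩ := hbound f hf
  obtain ⟨h₃, h₄⟩ := hbound (fun k => f (n + k)) fun k => hf _
  simp only [add_comm _ i] at hsplit₁ ⊢
  rw [add_comm n i] at hsplit₂
  rw [abs_le]
  constructor <;> linarith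

variable {N : Type*} [MetricSpace N] {ι : Type*}

def IsBarycenter (s : Finset ι) (y : ι → N) (a : N) : Prop :=
  ∀ r, ∑ i ∈ s, dist a (y i) ^ 2 ≤ ∑ i ∈ s, dist r (y i) ^ 2

def IsDistanceConvex (m : ℕ → N → N) : Prop :=
  ∀ n : ℕ, ∀ q : N, ∀ (γ : ℝ → N) (a b : N), IsGeodesic γ a b → ∀ t ∈ Icc (0:ℝ) 1,
    dist (m n (γ t)) q ^ 2 ≤ (1 - t) * dist (m n a) q ^ 2 + t * dist (m n b) q ^ 2

lemma NPCSpace.sum_dist_sq_geodesic_le (hN : NPCSpace N) (s : Finset ι) (y : ι → N)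
    {γ : ℝ → N} {a r : N} (hγ : IsGeodesic γ a r) {t : ℝ} (ht : t ∈ Icc (0:ℝ) 1) :
    ∑ i ∈ s, dist (γ t) (y i) ^ 2 ≤
      (1 - t) * ∑ i ∈ s, dist a (y i) ^ 2 + t * ∑ i ∈ s, dist r (y i) ^ 2
        - #s * (t * (1 - t) * dist a r ^ 2) := by
  calc ∑ i ∈ s, dist (γ t) (y i) ^ 2
      ≤ ∑ i ∈ s, ((1 - t) * dist a (y i) ^ 2 + t * dist r (y i) ^ 2
          - t * (1 - t) * dist a r ^ 2) :=
        sum_le_sum fun i _ => by simpa only [dist_comm (y i)] using hN.2 a (y i) r γ hγ t ht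
    _ = _ := by
      rw [sum_sub_distrib, sum_add_distrib, ← mul_sum, ← mul_sum, sum_const, nsmul_eq_mul]

/-- The variance inequality: compare `a` with the points of the geodesic to `r` close to `a`. -/
lemma IsBarycenter.card_mul_dist_sq_le (hN : NPCSpace N) {s : Finset ι} {y : ι → N} {a : N}
    (ha : IsBarycenter s y a) (r : N) :
    #s * dist a r ^ 2 ≤ ∑ i ∈ s, dist r (y i) ^ 2 - ∑ i ∈ s, dist a (y i) ^ 2 := by
  obtain ⟨γ, hγ⟩ := hN.1 a r
  refine le_of_forall_one_sub_mul_le fun t ht => ?_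
  have hgeod := hN.sum_dist_sq_geodesic_le s y hγ (Ioo_subset_Icc_self ht)
  have hmin := ha (γ t)
  have : t * ((1 - t) * (#s * dist a r ^ 2)) ≤
      t * (∑ i ∈ s, dist r (y i) ^ 2 - ∑ i ∈ s, dist a (y i) ^ 2) := by
    linarith
  exact le_of_mul_le_mul_left this ht.1

lemma IsBarycenter.dist_le (hN : NPCSpace N) {s : Finset ι} {y : ι → N} {a : N}
    (ha : IsBarycenter s y a) {j : ι} (hj : j ∈ s) {D : ℝ}
    (hD : ∀ i ∈ s, dist (y j) (y i) ≤ D) : dist a (y j) ≤ D := by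
  have hvar := ha.card_mul_dist_sq_le hN (y j)
  have hsum : ∑ i ∈ s, dist (y j) (y i) ^ 2 ≤ #s * D ^ 2 := by
    simpa using sum_le_card_nsmul s _ _ fun i hi =>
      pow_le_pow_left₀ dist_nonneg (hD i hi) 2
  have hcard : (0:ℝ) < #s := by exact_mod_cast card_pos.2 ⟨j, hj⟩
  have : dist a (y j) ^ 2 ≤ D ^ 2 := by
    have := sum_nonneg fun i (_ : i ∈ s) => sq_nonneg (dist a (y i))
    exact le_of_mul_le_mul_left (by linarith) hcard
  exact (abs_le_of_sq_le_sq' this (dist_nonneg.trans (hD j hj))).2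

lemma IsBarycenter.card_mul_dist_sq_le_of_shift (hN : NPCSpace N) {y : ℕ → N} {D : ℝ}
    (hy : ∀ j k, dist (y j) (y k) ≤ D) {n : ℕ} (hn : 0 < n) (i : ℕ) {a b : N}
    (ha : IsBarycenter (range n) y a) (hb : IsBarycenter (range n) (fun k => y (k + i)) b) :
    n * dist b a ^ 2 ≤ 2 * i * (2 * D) ^ 2 := by
  have h0 : 0 ∈ range n := mem_range.2 hn
  have hbounded : ∀ c j, dist c (y j) ≤ D → ∀ k, dist c (y k) ^ 2 ∈ Set.Icc 0 ((2 * D) ^ 2) :=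
    fun c j hc k => ⟨sq_nonneg _, pow_le_pow_left₀ dist_nonneg (by
      linarith [dist_triangle c (y j) (y k), hy j k]) 2⟩
  have ha₀ : dist a (y 0) ≤ D := ha.dist_le hN h0 fun k _ => hy 0 k
  have hbᵢ : dist b (y i) ≤ D := by
    simpa using hb.dist_le hN h0 fun k _ => hy (0 + i) (k + i)
  have hshift_a := abs_sum_range_add_sub_sum_range_le (hbounded a 0 ha₀) n i
  have hshift_b := abs_sum_range_add_sub_sum_range_le (hbounded b i hbᵢ) n i
  have hvar := ha.card_mul_dist_sq_le hN b
  have hmin := hb a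
  rw [card_range, dist_comm] at hvar
  rw [abs_le] at hshift_a hshift_b
  linarith

lemma IsBarycenter.tendsto_dist_sq_of_shift (hN : NPCSpace N) {y : ℕ → N} {D : ℝ}
    (hy : ∀ j k, dist (y j) (y k) ≤ D) (i : ℕ) {a b : ℕ → N}
    (ha : ∀ n, 0 < n → IsBarycenter (range n) y (a n))
    (hb : ∀ n, 0 < n → IsBarycenter (range n) (fun k => y (k + i)) (b n)) :
    Tendsto (fun n => dist (b n) (a n) ^ 2) atTop (𝓝 0) := by
  refine squeeze_zero' (Eventually.of_forall fun n => sq_nonneg _) ?_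
    (tendsto_const_div_atTop_nhds_zero_nat (2 * i * (2 * D) ^ 2))
  filter_upwards [eventually_gt_atTop 0] with n hn
  rw [le_div_iff₀' (by exact_mod_cast hn)]
  exact IsBarycenter.card_mul_dist_sq_le_of_shift hN hy hn i (ha n hn) (hb n hn)

lemma IsDistanceConvex.convexSubset_setOf_tendsto (hG : GeodesicSpace N) {m : ℕ → N → N}
    (hm : IsDistanceConvex m) (z : ℕ → N) :
    ConvexSubset {x | Tendsto (fun n => dist (m n x) (z n) ^ 2) atTop (𝓝 0)} := by
  intro a ha b hb
  obtain ⟨γ, hγ⟩ := hG a b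
  refine ⟨γ, hγ, fun t ht => ?_⟩
  refine squeeze_zero (fun n => sq_nonneg _) (fun n => hm n (z n) γ a b hγ t ht) ?_
  simpa using (ha.const_mul (1 - t)).add (hb.const_mul t)

end

theorem means_of_hull_point_close_general {N : Type*} [MetricSpace N]
    (hN : NPCSpace N) (T : N → N)
    (m : ℕ → N → N)
    (hm : ∀ n : ℕ, 0 < n → ∀ x r : N,
      (1 / (n : ℝ)) * ∑ i ∈ Finset.range n, dist (m n x) (T^[i] x) ^ 2 ≤
        (1 / (n : ℝ)) * ∑ i ∈ Finset.range n, dist r (T^[i] x) ^ 2)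
    (hdc : ∀ n : ℕ, ∀ q : N, ∀ (γ : ℝ → N) (a b : N), IsGeodesic γ a b →
      ∀ t ∈ Icc (0:ℝ) 1,
        dist (m n (γ t)) q ^ 2 ≤
          (1 - t) * dist (m n a) q ^ 2 + t * dist (m n b) q ^ 2)
    (p : N) (hbdd : Bornology.IsBounded (Set.range fun i : ℕ => T^[i] p))
    (C : Set N) (hC : IsConvexHull (Set.range fun i : ℕ => T^[i] p) C)
    (s : N) (hs : s ∈ C) :
    ∀ ε > (0:ℝ), ∃ N₀ : ℕ, ∀ n ≥ N₀, dist (m n p) (m n s) < ε := by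
  obtain ⟨D, hD⟩ := Metric.isBounded_iff.1 hbdd
  have hbary : ∀ n, 0 < n → ∀ x, IsBarycenter (Finset.range n) (fun k => T^[k] x) (m n x) :=
    fun n hn x r => le_of_mul_le_mul_left (hm n hn x r) (by positivity)
  have horbit : Set.range (fun i : ℕ => T^[i] p) ⊆
      {x | Tendsto (fun n => dist (m n x) (m n p) ^ 2) atTop (𝓝 0)} := by
    rintro _ ⟨i, rfl⟩
    refine IsBarycenter.tendsto_dist_sq_of_shift hN (fun j k => hD ⟨j, rfl⟩ ⟨k, rfl⟩) i
      (hbary · · p) fun n hn => ?_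
    simpa only [Function.iterate_add_apply] using hbary n hn (T^[i] p)
  have hs' := hC.2.2 _ (IsDistanceConvex.convexSubset_setOf_tendsto hN.1 hdc _) horbit hs
  have hlim : Tendsto (fun n => dist (m n s) (m n p)) atTop (𝓝 0) := by
    simpa [Real.sqrt_sq dist_nonneg] using hs'.sqrt
  intro ε hε
  obtain ⟨N₀, hN₀⟩ := Metric.tendsto_atTop.1 hlim ε hε
  exact ⟨N₀, fun n hn => by simpa [dist_comm] using hN₀ n hn⟩

/-- for a distance convex nonexpansive map with bounded orbit of `p`
and any `s` in the convex hull of the orbit, the means of the iterates of `p` and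
`s` become arbitrarily close. -/
theorem means_of_hull_point_close {N : Type*} [MetricSpace N] [CompleteSpace N]
    (hN : NPCSpace N) (T : N → N)
    (hT : ∀ x y : N, dist (T x) (T y) ≤ dist x y)
    (m : ℕ → N → N)
    (hm : ∀ n : ℕ, 0 < n → ∀ x r : N,
      (1 / (n : ℝ)) * ∑ i ∈ Finset.range n, dist (m n x) (T^[i] x) ^ 2 ≤
        (1 / (n : ℝ)) * ∑ i ∈ Finset.range n, dist r (T^[i] x) ^ 2)
    (hmuniq : ∀ n : ℕ, 0 < n → ∀ x r : N,
      ((1 / (n : ℝ)) * ∑ i ∈ Finset.range n, dist r (T^[i] x) ^ 2 =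
        (1 / (n : ℝ)) * ∑ i ∈ Finset.range n, dist (m n x) (T^[i] x) ^ 2) → r = m n x)
    (hdc : ∀ n : ℕ, ∀ q : N, ∀ (γ : ℝ → N) (a b : N), IsGeodesic γ a b →
      ∀ t ∈ Icc (0:ℝ) 1,
        dist (m n (γ t)) q ^ 2 ≤
          (1 - t) * dist (m n a) q ^ 2 + t * dist (m n b) q ^ 2)
    (p : N) (hbdd : Bornology.IsBounded (Set.range fun i : ℕ => T^[i] p))
    (C : Set N) (hC : IsConvexHull (Set.range fun i : ℕ => T^[i] p) C)
    (s : N) (hs : s ∈ C) :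
    ∀ ε > (0:ℝ), ∃ N₀ : ℕ, ∀ n ≥ N₀, dist (m n p) (m n s) < ε :=
  means_of_hull_point_close_general hN T m hm hdc p hbdd C hC s hs
end
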